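/- Inversion for universal quantifiers: if (γ, k) ⊢^α_c Γ, ∀x A(x), then for every natural number n, (γ, max(k,n)) ⊢^α_c Γ, A(n). -/

import Mathlib

open ONote in
/-- `α` is a successor ordinal notation (its Cantor normal form ends with `ω^0·m`). -/
def ONote.isSucc : ONote → Prop
  | ONote.zero => False
  | ONote.oadd e _ ONote.zero => e = 0
  | ONote.oadd _ _ (ONote.oadd e n a) => ONote.isSucc (ONote.oadd e n a)

instance : DecidablePred ONote.isSucc := by
  intro a
  induction a with
  | zero => exact .isFalse (by simp [ONote.isSucc])
  | oadd e n a ihe iha =>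
    cases a with
    | zero => exact decidable_of_iff (e = 0) Iff.rfl
    | oadd e' n' a' => exact iha

/-- The standard fundamental sequence assignment `α[x]` on Cantor normal forms:
`0[x] = 0`, `(α+1)[x] = α`, and for `λ` with last term `ω^(β+1)` one has
`λ[x] = (λ - ω^(β+1)) + ω^β·x`, while for last term `ω^γ` (`γ` limit),
`λ[x] = (λ - ω^γ) + ω^(γ[x])`. -/
def ONote.fseq : ONote → ℕ → ONote
  | ONote.zero, _ => ONote.zero
  | ONote.oadd e m (ONote.oadd e' m' a'), x =>
      ONote.oadd e m (ONote.fseq (ONote.oadd e' m' a') x)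
  | ONote.oadd ONote.zero m ONote.zero, _ =>
      if _h : m = 1 then ONote.zero else ONote.oadd ONote.zero (m - 1) ONote.zero
  | ONote.oadd (ONote.oadd e1 m1 a1) m ONote.zero, x =>
      let e := ONote.oadd e1 m1 a1
      let tail : ONote → ONote :=
        fun t => if m = 1 then t else ONote.oadd e (m - 1) t
      if ONote.isSucc e then
        match x with
        | 0 => tail ONote.zero
        | Nat.succ y => tail (ONote.oadd (ONote.fseq e (y+1)) (Nat.succPNat y) ONote.zero)
      else tail (ONote.oadd (ONote.fseq e x) 1 ONote.zero)

/-- `α <_n β` : transitive closure of `α = β[n]`. -/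
def ONote.stepLt (n : ℕ) (a b : ONote) : Prop :=
  Relation.TransGen (fun x y => x = ONote.fseq y n) a b

/-- `α ≤_n β`. -/
def ONote.stepLe (n : ℕ) (a b : ONote) : Prop :=
  ONote.stepLt n a b ∨ a = b

/-- The graph of the Hardy hierarchy: `H_0(x) = x`, `H_{α+1}(x) = H_α(x+1)`,
`H_λ(x) = H_{λ[x]}(x)` for limit `λ`. -/
inductive HardyRel : ONote → ℕ → ℕ → Prop
  | zero (x : ℕ) : HardyRel ONote.zero x x
  | succ {a : ONote} {x y : ℕ} (h : a.isSucc) (hrec : HardyRel (a.fseq x) (x + 1) y) :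
      HardyRel a x y
  | limit {a : ONote} {x y : ℕ} (h0 : a ≠ ONote.zero) (h : ¬ a.isSucc)
      (hrec : HardyRel (a.fseq x) x y) : HardyRel a x y

open scoped Classical in
/-- The Hardy function `H_α : ℕ → ℕ` (for `α` in normal form the defining
recursion terminates, so `hardy` is the unique value of the graph `HardyRel`). -/
noncomputable def hardy (a : ONote) (x : ℕ) : ℕ :=
  if h : ∃ y, HardyRel a x y then h.choose else 0

/-- Infinitary sentences of arithmetic: `Δ₀`-sentences are identified with their
truth value, and quantifiers range over numerals. -/
inductive Fml : Type 1 where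
  | delta0 (P : Prop) : Fml
  | or (A B : Fml) : Fml
  | and (A B : Fml) : Fml
  | ex (A : ℕ → Fml) : Fml
  | all (A : ℕ → Fml) : Fml

/-- Negation (de Morgan dual). -/
def Fml.neg : Fml → Fml
  | .delta0 P => .delta0 (¬ P)
  | .or A B => .and A.neg B.neg
  | .and A B => .or A.neg B.neg
  | .ex A => .all fun n => (A n).neg
  | .all A => .ex fun n => (A n).neg

/-- `dg(A)`: `dg = 0` on `Δ₀`, `max` at `∨,∧`, `+1` at quantifiers. -/
def Fml.dg : Fml → ℕ
  | .delta0 _ => 0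
  | .or A B => max A.dg B.dg
  | .and A B => max A.dg B.dg
  | .ex A => (A 0).dg + 1
  | .all A => (A 0).dg + 1

/-- `A` is a `Σ₁`-sentence `∃x A₀(x)` with `A₀ ∈ Δ₀`. -/
def Fml.IsSigma1 (A : Fml) : Prop :=
  ∃ f : ℕ → Fml, A = Fml.ex f ∧ ∀ n, ∃ P : Prop, f n = Fml.delta0 P

/-- Truth of a `Δ₀`-sentence. -/
def Fml.TrueD0 (A : Fml) : Prop := ∃ P : Prop, A = Fml.delta0 P ∧ P

/-- `k ⊨ ∃x A(x)` : there is a witness `n < k` making the `Δ₀`-matrix true. -/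
def Fml.SatBelow (k : ℕ) (A : Fml) : Prop :=
  ∃ f : ℕ → Fml, A = Fml.ex f ∧ ∃ n < k, (f n).TrueD0

/-- The witness-bounding derivability relation `(γ, k) ⊢^α_c Γ`, with
`ℓ = H_γ(k)` controlling ordinal descent and existential witnesses. -/
inductive Der : ONote → ℕ → ONote → ℕ → Set Fml → Prop
  | ax {γ : ONote} {k : ℕ} {α : ONote} {c : ℕ} {Γ : Set Fml} (P : Prop) (hP : P)
      (hmem : Fml.delta0 P ∈ Γ) : Der γ k α c Γ
  | cut {γ : ONote} {k : ℕ} {α α₀ : ONote} {c : ℕ} {Γ : Set Fml} (A : Fml)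
      (hord : ONote.stepLe (hardy γ k) (α₀ + 1) α) (hdg : A.dg < c)
      (d₁ : Der γ k α₀ c (insert A Γ)) (d₂ : Der γ k α₀ c (insert A.neg Γ)) :
      Der γ k α c Γ
  | and {γ : ONote} {k : ℕ} {α α₀ : ONote} {c : ℕ} {Γ : Set Fml} (A₀ A₁ : Fml)
      (hord : ONote.stepLt (hardy γ k) α₀ α) (hmem : Fml.and A₀ A₁ ∈ Γ)
      (d₀ : Der γ k α₀ c (insert A₀ Γ)) (d₁ : Der γ k α₀ c (insert A₁ Γ)) :
      Der γ k α c Γ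
  | or {γ : ONote} {k : ℕ} {α α₀ : ONote} {c : ℕ} {Γ : Set Fml} (A₀ A₁ : Fml) (i : Bool)
      (hord : ONote.stepLe (hardy γ k) (α₀ + 1) α) (hmem : Fml.or A₀ A₁ ∈ Γ)
      (d : Der γ k α₀ c (insert (cond i A₀ A₁) Γ)) : Der γ k α c Γ
  | allOmega {γ : ONote} {k : ℕ} {α α₀ : ONote} {c : ℕ} {Γ : Set Fml} (A : ℕ → Fml)
      (hord : ONote.stepLt (hardy γ k) α₀ α) (hmem : Fml.all A ∈ Γ)
      (d : ∀ n : ℕ, Der γ (max k n) α₀ c (insert (A n) Γ)) : Der γ k α c Γ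
  | exIntro {γ : ONote} {k : ℕ} {α α₀ : ONote} {c : ℕ} {Γ : Set Fml} (A : ℕ → Fml) (n : ℕ)
      (hord : ONote.stepLe (hardy γ k) (α₀ + 1) α) (hmem : Fml.ex A ∈ Γ)
      (hn : n < hardy γ k) (d : Der γ k α₀ c (insert (A n) Γ)) : Der γ k α c Γ

/-!
Inversion is proved by induction on the derivation, replacing `∀x A(x)` by `A(n)` everywhere;
at an `(∀ω)` inference on `∀x A(x)` itself, its `n`-th premise already derives `Γ, A(n)`.
The only subtlety is that the numeral `n` raises `k` to `max(k, n)`, and with it the bound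
`ℓ = H_γ(k)` of every side condition. Those side conditions survive because the Hardy functions
are monotone and the fundamental sequences have the Bachmann property `α[n] ≤_m α[m]` for
`n ≤ m`, so that `α <_ℓ β` implies `α <_ℓ' β` for `ℓ ≤ ℓ'`.
-/

namespace ONote

open Ordinal Relation

instance : WellFoundedLT ONote := ⟨InvImage.wf repr Ordinal.lt_wf⟩

/-- `ω^e·(m-1) + t`; the case split is needed because `1 - 1 = 1` in `ℕ+`. -/
def oaddPred (e : ONote) (m : ℕ+) (t : ONote) : ONote :=
  if m = 1 then t else oadd e (m - 1) t

theorem oaddPred_add_one (e : ONote) (j : ℕ+) (t : ONote) :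
    oaddPred e (j + 1) t = oadd e j t := by
  rw [oaddPred, if_neg (PNat.lt_add_left 1 j).ne', PNat.add_sub]

theorem oaddPred_one (e t : ONote) : oaddPred e 1 t = t := rfl

theorem fseq_oadd_oadd (e : ONote) (m : ℕ+) (e' : ONote) (m' : ℕ+) (t : ONote) (x : ℕ) :
    fseq (oadd e m (oadd e' m' t)) x = oadd e m (fseq (oadd e' m' t) x) := rfl

theorem fseq_oadd_zero_zero (m : ℕ+) (x : ℕ) : fseq (oadd 0 m 0) x = oaddPred 0 m 0 := rfl

theorem fseq_oadd_zero_of_isSucc_zero {e : ONote} (he : e.isSucc) (m : ℕ+) :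
    fseq (oadd e m 0) 0 = oaddPred e m 0 := by
  cases e with
  | zero => exact absurd he id
  | oadd => simp [fseq, oaddPred, he]

theorem fseq_oadd_zero_of_isSucc_succ {e : ONote} (he : e.isSucc) (m : ℕ+) (y : ℕ) :
    fseq (oadd e m 0) (y + 1) = oaddPred e m (oadd (fseq e (y + 1)) y.succPNat 0) := by
  cases e with
  | zero => exact absurd he id
  | oadd => simp [fseq, oaddPred, he]

theorem fseq_oadd_zero_of_not_isSucc {e : ONote} (he0 : e ≠ 0) (he : ¬ e.isSucc) (m : ℕ+)
    (x : ℕ) : fseq (oadd e m 0) x = oaddPred e m (oadd (fseq e x) 1 0) := by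
  cases e with
  | zero => exact absurd rfl he0
  | oadd => simp [fseq, oaddPred, he]

theorem fseq_eq_of_isSucc {a : ONote} (h : a.isSucc) (x y : ℕ) : fseq a x = fseq a y := by
  induction a with
  | zero => exact absurd h id
  | oadd e m t _ iht =>
    cases t with
    | zero =>
      obtain rfl : e = 0 := h
      rfl
    | oadd => rw [fseq_oadd_oadd, fseq_oadd_oadd, iht h]

theorem repr_oaddPred_lt {e t : ONote} (m : ℕ+) (ht : repr t < ω ^ repr e) :
    repr (oaddPred e m t) < repr (oadd e m 0) := by
  unfold oaddPred
  split_ifs with hm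
  · simpa [hm] using ht
  · obtain ⟨j, rfl⟩ : ∃ j : ℕ+, m = j + 1 := PNat.exists_eq_succ_of_ne_one hm
    simpa [PNat.add_sub, mul_add_one] using ht

theorem fseq_lt {a : ONote} (h : a ≠ 0) (x : ℕ) : fseq a x < a := by
  induction a generalizing x with
  | zero => exact absurd rfl h
  | oadd e m t ihe iht =>
    cases t with
    | oadd e' m' t' =>
      have := iht (oadd_pos _ _ _).ne' x
      rw [lt_def] at this ⊢
      simpa [fseq_oadd_oadd] using this
    | zero =>
      change fseq (oadd e m 0) x < oadd e m 0
      by_cases he0 : e = 0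
      · subst he0
        exact repr_oaddPred_lt m (by simp)
      have opow_lt (x : ℕ) (j : ℕ+) : repr (oadd (fseq e x) j 0) < ω ^ repr e := by
        simpa using opow_mul_lt_opow (natCast_lt_omega0 j) (lt_def.1 (ihe he0 x))
      by_cases hs : e.isSucc
      · cases x with
        | zero =>
          rw [fseq_oadd_zero_of_isSucc_zero hs]
          exact repr_oaddPred_lt m (by simp [opow_pos])
        | succ y =>
          rw [fseq_oadd_zero_of_isSucc_succ hs]
          exact repr_oaddPred_lt m (opow_lt _ _)
      · rw [fseq_oadd_zero_of_not_isSucc he0 hs]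
        exact repr_oaddPred_lt m (opow_lt _ _)

theorem fseq_le (a : ONote) (x : ℕ) : fseq a x ≤ a := by
  rcases eq_or_ne a 0 with rfl | h
  · exact le_rfl
  · exact (fseq_lt h x).le

theorem stepLe_iff_reflTransGen {n : ℕ} {a b : ONote} :
    stepLe n a b ↔ ReflTransGen (fun x y => x = fseq y n) a b := by
  rw [reflTransGen_iff_eq_or_transGen, stepLe, stepLt, or_comm, eq_comm]

theorem stepLe.refl (n : ℕ) (a : ONote) : stepLe n a a := Or.inr rfl

theorem stepLt.le {n : ℕ} {a b : ONote} (h : stepLt n a b) : stepLe n a b := Or.inl h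

theorem stepLt_fseq (n : ℕ) (a : ONote) : stepLt n (fseq a n) a := TransGen.single rfl

theorem stepLe.trans {n : ℕ} {a b c : ONote} (hab : stepLe n a b) (hbc : stepLe n b c) :
    stepLe n a c :=
  stepLe_iff_reflTransGen.2 ((stepLe_iff_reflTransGen.1 hab).trans (stepLe_iff_reflTransGen.1 hbc))

theorem stepLt.trans_le {n : ℕ} {a b c : ONote} (hab : stepLt n a b) (hbc : stepLe n b c) :
    stepLt n a c :=
  hab.trans_left (stepLe_iff_reflTransGen.1 hbc)

theorem stepLe.trans_lt {n : ℕ} {a b c : ONote} (hab : stepLe n a b) (hbc : stepLt n b c) :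
    stepLt n a c :=
  TransGen.trans_right (stepLe_iff_reflTransGen.1 hab) hbc

theorem stepLe.lift {x y : ℕ} (f : ONote → ONote) (hf : ∀ b, stepLe y (f (fseq b x)) (f b))
    {a b : ONote} (h : stepLe x a b) : stepLe y (f a) (f b) :=
  stepLe_iff_reflTransGen.2 <| ReflTransGen.lift' f
    (fun _ b hab => hab ▸ stepLe_iff_reflTransGen.1 (hf b)) _ _ (stepLe_iff_reflTransGen.1 h)

theorem stepLt.lift {x y : ℕ} (f : ONote → ONote) (hf : ∀ b, stepLt y (f (fseq b x)) (f b))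
    {a b : ONote} (h : stepLt x a b) : stepLt y (f a) (f b) :=
  TransGen.lift' f (fun _ b hab => hab ▸ hf b) _ _ h

theorem stepLe.to_le {x : ℕ} {a b : ONote} (h : stepLe x a b) : a ≤ b := by
  rw [stepLe_iff_reflTransGen] at h
  induction h with
  | refl => exact le_rfl
  | tail _ hcd ih =>
    subst hcd
    exact ih.trans (fseq_le _ x)

theorem zero_stepLe (x : ℕ) (a : ONote) : stepLe x 0 a := by
  induction a using WellFoundedLT.induction with
  | _ a ih =>
    rcases eq_or_ne a 0 with rfl | h
    · exact stepLe.refl x 0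
    · exact ((ih _ (fseq_lt h x)).trans_lt (stepLt_fseq x a)).le

theorem stepLe.oadd_tail {x : ℕ} (e : ONote) (m : ℕ+) {t t' : ONote} (h : stepLe x t t') :
    stepLe x (oadd e m t) (oadd e m t') := by
  refine h.lift (oadd e m) fun b => ?_
  cases b with
  | zero => exact stepLe.refl x _
  | oadd e' m' t' => exact (stepLt_fseq x (oadd e m (oadd e' m' t'))).le

theorem stepLe.oaddPred {x : ℕ} (e : ONote) (m : ℕ+) {t t' : ONote} (h : stepLe x t t') :
    stepLe x (oaddPred e m t) (oaddPred e m t') := by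
  unfold ONote.oaddPred
  split_ifs
  exacts [h, h.oadd_tail e _]

theorem exists_fseq_oadd_add_one (c : ONote) (j : ℕ+) (x : ℕ) :
    ∃ t, fseq (oadd c (j + 1) 0) x = oadd c j t := by
  simp only [← oaddPred_add_one]
  by_cases hc0 : c = 0
  · exact ⟨0, hc0 ▸ fseq_oadd_zero_zero _ _⟩
  by_cases hs : c.isSucc
  · cases x with
    | zero => exact ⟨0, fseq_oadd_zero_of_isSucc_zero hs _⟩
    | succ y => exact ⟨_, fseq_oadd_zero_of_isSucc_succ hs _ y⟩
  · exact ⟨_, fseq_oadd_zero_of_not_isSucc hc0 hs _ x⟩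

theorem stepLe_oadd_coeff {x : ℕ} (c : ONote) {j j' : ℕ+} (h : j ≤ j') :
    stepLe x (oadd c j 0) (oadd c j' 0) := by
  induction j' using PNat.recOn with
  | one => exact (le_antisymm h one_le) ▸ stepLe.refl x _
  | succ p ih =>
    rcases h.eq_or_lt with rfl | hlt
    · exact stepLe.refl x _
    obtain ⟨t, ht⟩ := exists_fseq_oadd_add_one c p x
    have hstep : stepLe x (oadd c p t) (oadd c (p + 1) 0) := ht ▸ (stepLt_fseq x _).le
    exact (ih (PNat.lt_add_one_iff.1 hlt)).trans (((zero_stepLe x t).oadd_tail c p).trans hstep)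

theorem stepLe.opow {x : ℕ} (hx : 1 ≤ x) {b b' : ONote} (h : stepLe x b b') :
    stepLe x (oadd b 1 0) (oadd b' 1 0) := by
  refine h.lift (fun b => oadd b 1 0) fun b => ?_
  by_cases hb0 : b = 0
  · subst hb0
    exact stepLe.refl x _
  by_cases hs : b.isSucc
  · obtain ⟨y, rfl⟩ := Nat.exists_eq_add_of_le' hx
    have hstep := stepLt_fseq (y + 1) (oadd b 1 0)
    rw [fseq_oadd_zero_of_isSucc_succ hs, oaddPred_one] at hstep
    exact (stepLe_oadd_coeff _ one_le).trans hstep.le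
  · have hstep := stepLt_fseq x (oadd b 1 0)
    rw [fseq_oadd_zero_of_not_isSucc hb0 hs, oaddPred_one] at hstep
    exact hstep.le

theorem fseq_stepLe_fseq (a : ONote) {n m : ℕ} (hnm : n ≤ m) :
    stepLe m (fseq a n) (fseq a m) := by
  induction a generalizing n m with
  | zero => exact stepLe.refl m 0
  | oadd e k t ihe iht =>
    cases t with
    | oadd e' k' t' =>
      simp only [fseq_oadd_oadd]
      exact (iht hnm).oadd_tail e k
    | zero =>
      change stepLe m (fseq (oadd e k 0) n) (fseq (oadd e k 0) m)
      rcases hnm.eq_or_lt with rfl | hlt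
      · exact stepLe.refl n _
      by_cases he0 : e = 0
      · subst he0
        exact stepLe.refl m _
      obtain ⟨y, rfl⟩ := Nat.exists_eq_add_of_le' (Nat.one_le_of_lt hlt)
      by_cases hs : e.isSucc
      · rw [fseq_oadd_zero_of_isSucc_succ hs]
        cases n with
        | zero =>
          rw [fseq_oadd_zero_of_isSucc_zero hs]
          exact (zero_stepLe _ _).oaddPred e k
        | succ z =>
          rw [fseq_oadd_zero_of_isSucc_succ hs, fseq_eq_of_isSucc hs (z + 1) (y + 1)]
          exact (stepLe_oadd_coeff _ (Nat.succPNat_le_succPNat.2 (by omega))).oaddPred e k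
      · rw [fseq_oadd_zero_of_not_isSucc he0 hs, fseq_oadd_zero_of_not_isSucc he0 hs]
        exact ((ihe hnm).opow (Nat.le_add_left 1 y)).oaddPred e k

theorem stepLt.mono {l l' : ℕ} (hl : l ≤ l') {a b : ONote} (h : stepLt l a b) :
    stepLt l' a b :=
  h.lift id fun b => (fseq_stepLe_fseq b hl).trans_lt (stepLt_fseq l' b)

theorem stepLe.mono {l l' : ℕ} (hl : l ≤ l') {a b : ONote} (h : stepLe l a b) :
    stepLe l' a b :=
  h.lift id fun b => (fseq_stepLe_fseq b hl).trans (stepLt_fseq l' b).le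

end ONote

section Hardy

open ONote

theorem hardyRel_exists (a : ONote) (x : ℕ) : ∃ y, HardyRel a x y := by
  induction a using WellFoundedLT.induction generalizing x with
  | _ a ih =>
    by_cases h0 : a = 0
    · exact ⟨x, h0 ▸ HardyRel.zero x⟩
    by_cases hs : a.isSucc
    · obtain ⟨y, hy⟩ := ih _ (fseq_lt h0 x) (x + 1)
      exact ⟨y, HardyRel.succ hs hy⟩
    · obtain ⟨y, hy⟩ := ih _ (fseq_lt h0 x) x
      exact ⟨y, HardyRel.limit h0 hs hy⟩

theorem HardyRel.unique {a : ONote} {x y y' : ℕ} (h : HardyRel a x y) (h' : HardyRel a x y') :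
    y = y' := by
  induction h generalizing y' with
  | zero => cases h' <;> trivial
  | succ hs _ ih =>
    cases h' with
    | zero => exact absurd hs id
    | succ _ hrec => exact ih hrec
    | limit _ hns _ => exact absurd hs hns
  | limit h0 hns _ ih =>
    cases h' with
    | zero => exact absurd rfl h0
    | succ hs _ => exact absurd hs hns
    | limit _ _ hrec => exact ih hrec

theorem hardyRel_hardy (a : ONote) (x : ℕ) : HardyRel a x (hardy a x) := by
  rw [hardy, dif_pos (hardyRel_exists a x)]
  exact (hardyRel_exists a x).choose_spec

theorem HardyRel.hardy_eq {a : ONote} {x y : ℕ} (h : HardyRel a x y) : hardy a x = y :=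
  (hardyRel_hardy a x).unique h

theorem hardy_zero (x : ℕ) : hardy 0 x = x := (HardyRel.zero x).hardy_eq

theorem hardy_of_isSucc {a : ONote} (hs : a.isSucc) (x : ℕ) :
    hardy a x = hardy (fseq a x) (x + 1) :=
  (HardyRel.succ hs (hardyRel_hardy _ _)).hardy_eq

theorem hardy_of_not_isSucc {a : ONote} (h0 : a ≠ 0) (hs : ¬ a.isSucc) (x : ℕ) :
    hardy a x = hardy (fseq a x) x :=
  (HardyRel.limit h0 hs (hardyRel_hardy _ _)).hardy_eq

theorem hardy_fseq_le {a : ONote} (hmono : ∀ d < a, Monotone (hardy d)) (x : ℕ) :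
    hardy (fseq a x) x ≤ hardy a x := by
  by_cases h0 : a = 0
  · subst h0
    exact le_rfl
  by_cases hs : a.isSucc
  · rw [hardy_of_isSucc hs]
    exact hmono _ (fseq_lt h0 x) (Nat.le_succ x)
  · rw [hardy_of_not_isSucc h0 hs]

theorem hardy_le_of_stepLe {a b : ONote} {x : ℕ} (hmono : ∀ d < a, Monotone (hardy d))
    (h : stepLe x b a) : hardy b x ≤ hardy a x := by
  rw [stepLe_iff_reflTransGen] at h
  induction h using Relation.ReflTransGen.head_induction_on with
  | refl => exact le_rfl
  | head hbc hca ih =>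
    subst hbc
    have hca : _ ≤ a := (stepLe_iff_reflTransGen.2 hca).to_le
    exact (hardy_fseq_le (fun d hd => hmono d (hd.trans_le hca)) x).trans ih

theorem hardy_monotone (a : ONote) : Monotone (hardy a) := by
  induction a using WellFoundedLT.induction with
  | _ a ih =>
    refine monotone_nat_of_le_succ fun x => ?_
    by_cases h0 : a = 0
    · subst h0
      simp [hardy_zero]
    by_cases hs : a.isSucc
    · rw [hardy_of_isSucc hs, hardy_of_isSucc hs, fseq_eq_of_isSucc hs (x + 1) x]
      exact ih _ (fseq_lt h0 x) (Nat.le_succ _)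
    · rw [hardy_of_not_isSucc h0 hs, hardy_of_not_isSucc h0 hs]
      calc hardy (fseq a x) x ≤ hardy (fseq a x) (x + 1) := ih _ (fseq_lt h0 x) (Nat.le_succ x)
        _ ≤ hardy (fseq a (x + 1)) (x + 1) :=
          hardy_le_of_stepLe (fun d hd => ih d (hd.trans (fseq_lt h0 _)))
            (fseq_stepLe_fseq a (Nat.le_succ x))

end Hardy

section Inversion

open ONote

variable {γ : ONote} {k c : ℕ}

theorem Der.ordinal_mono {α α' : ONote} {Γ : Set Fml} (d : Der γ k α c Γ)
    (h : stepLe (hardy γ k) α α') : Der γ k α' c Γ := by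
  cases d with
  | ax P hP hmem => exact .ax P hP hmem
  | cut A hord hdg d₁ d₂ => exact .cut A (hord.trans h) hdg d₁ d₂
  | and A₀ A₁ hord hmem d₀ d₁ => exact .and A₀ A₁ (hord.trans_le h) hmem d₀ d₁
  | or A₀ A₁ i hord hmem d => exact .or A₀ A₁ i (hord.trans h) hmem d
  | allOmega A hord hmem d => exact .allOmega A (hord.trans_le h) hmem d
  | exIntro A n hord hmem hn d => exact .exIntro A n (hord.trans h) hmem hn d

theorem Der.inversion_of_subset {A : ℕ → Fml} (n : ℕ) {α : ONote} {Δ : Set Fml}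
    (d : Der γ k α c Δ) {Γ : Set Fml} (hΔ : Δ ⊆ insert (Fml.all A) Γ) :
    Der γ (max k n) α c (insert (A n) Γ) := by
  have hℓ (k : ℕ) : hardy γ k ≤ hardy γ (max k n) := hardy_monotone γ (le_max_left k n)
  have mem {Δ Γ : Set Fml} {B : Fml} (hΔ : Δ ⊆ insert (Fml.all A) Γ) (hB : B ∈ Δ)
      (hne : B ≠ Fml.all A) : B ∈ insert (A n) Γ :=
    Set.mem_insert_of_mem _ (Set.mem_of_mem_insert_of_ne (hΔ hB) hne)
  have sub {Δ Γ : Set Fml} (B : Fml) (hΔ : Δ ⊆ insert (Fml.all A) Γ) :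
      insert B Δ ⊆ insert (Fml.all A) (insert B Γ) :=
    Set.insert_comm B (Fml.all A) Γ ▸ Set.insert_subset_insert hΔ
  induction d generalizing Γ with
  | ax P hP hmem => exact .ax P hP (mem hΔ hmem (by simp))
  | cut B hord hdg _ _ ih₁ ih₂ =>
    exact .cut B (hord.mono (hℓ _)) hdg (Set.insert_comm B (A n) Γ ▸ ih₁ (sub B hΔ))
      (Set.insert_comm B.neg (A n) Γ ▸ ih₂ (sub B.neg hΔ))
  | and A₀ A₁ hord hmem _ _ ih₀ ih₁ =>
    exact .and A₀ A₁ (hord.mono (hℓ _)) (mem hΔ hmem (by simp))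
      (Set.insert_comm A₀ (A n) Γ ▸ ih₀ (sub A₀ hΔ))
      (Set.insert_comm A₁ (A n) Γ ▸ ih₁ (sub A₁ hΔ))
  | or A₀ A₁ i hord hmem _ ih =>
    exact .or A₀ A₁ i (hord.mono (hℓ _)) (mem hΔ hmem (by simp))
      (Set.insert_comm _ (A n) Γ ▸ ih (sub _ hΔ))
  | exIntro B m hord hmem hm _ ih =>
    exact .exIntro B m (hord.mono (hℓ _)) (mem hΔ hmem (by simp)) (hm.trans_le (hℓ _))
      (Set.insert_comm _ (A n) Γ ▸ ih (sub _ hΔ))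
  | allOmega B hord hmem _ ih =>
    by_cases hBA : B = A
    · subst hBA
      have hn := ih n (sub (B n) hΔ)
      rw [Set.insert_idem, max_assoc, max_self] at hn
      exact hn.ordinal_mono (hord.mono (hℓ _)).le
    · refine .allOmega B (hord.mono (hℓ _)) (mem hΔ hmem (by simpa using hBA)) fun m => ?_
      rw [max_right_comm]
      exact Set.insert_comm _ (A n) Γ ▸ ih m (sub _ hΔ)

end Inversion

theorem Der.inversion_general (γ α : ONote) (k c : ℕ) (Γ : Set Fml) (A : ℕ → Fml)
    (d : Der γ k α c (insert (Fml.all A) Γ)) :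
    ∀ n : ℕ, Der γ (max k n) α c (insert (A n) Γ) :=
  fun n => d.inversion_of_subset n subset_rfl

/-- Inversion: if `(γ,k) ⊢^α_c Γ, ∀x A(x)`, then for every `n`,
`(γ, max(k,n)) ⊢^α_c Γ, A(n)`. -/
theorem Der.inversion (γ α : ONote) (k c : ℕ) (Γ : Set Fml) (A : ℕ → Fml)
    (hγ : γ.NF) (hα : α.NF)
    (d : Der γ k α c (insert (Fml.all A) Γ)) :
    ∀ n : ℕ, Der γ (max k n) α c (insert (A n) Γ) :=
  Der.inversion_general γ α k c Γ A d
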